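/- For integers r ≥ 0, m ≥ 1 and n ≥ 1, the generalized hyperharmonic number satisfies h_n^{(r+1)}(m) = C(n+r, r) · Σ_{1 ≤ k_m < ⋯ < k_1 ≤ n} 1/((k_1 + r)(k_2 + r)⋯(k_m + r)), where C(n+r, r) is the binomial coefficient. -/

import Mathlib

open Finset

/-- Multiple harmonic number `ζ_n({1}_m)`:
`ζ_n({1}_m) = ∑_{n ≥ n₁ > n₂ > ⋯ > n_m ≥ 1} 1/(n₁ ⋯ n_m)`, with `ζ_n({1}_0) = 1`. -/
noncomputable def mhn : ℕ → ℕ → ℝ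
  | _, 0 => 1
  | n, m + 1 => ∑ k ∈ Finset.Icc 1 n, mhn (k - 1) m / (k : ℝ)

/-- Multiple harmonic star number `ζ_n^⋆({1}_m)`:
`ζ_n^⋆({1}_m) = ∑_{n ≥ n₁ ≥ n₂ ≥ ⋯ ≥ n_m ≥ 1} 1/(n₁ ⋯ n_m)`, with `ζ_n^⋆({1}_0) = 1`. -/
noncomputable def mhsn : ℕ → ℕ → ℝ
  | _, 0 => 1
  | n, m + 1 => ∑ k ∈ Finset.Icc 1 n, mhsn k m / (k : ℝ)

/-- Multiple harmonic number with repeated real argument `p`: `ζ_n({p}_m)`. -/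
noncomputable def mhnP (p : ℝ) : ℕ → ℕ → ℝ
  | _, 0 => 1
  | n, m + 1 => ∑ k ∈ Finset.Icc 1 n, mhnP p (k - 1) m / (k : ℝ) ^ p

/-- Multiple harmonic star number with repeated real argument `p`: `ζ_n^⋆({p}_m)`. -/
noncomputable def mhsnP (p : ℝ) : ℕ → ℕ → ℝ
  | _, 0 => 1
  | n, m + 1 => ∑ k ∈ Finset.Icc 1 n, mhsnP p k m / (k : ℝ) ^ p

/-- Generalized harmonic number `H_n^{(p)} = ∑_{j=1}^n 1/j^p`. -/
noncomputable def genH (p n : ℕ) : ℝ := ∑ j ∈ Finset.Icc 1 n, 1 / (j : ℝ) ^ p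

/-- Auxiliary: `hypAux m n k = h_n^{(m+1)}(k)` for `k ≥ 1` (peel off the weak outer indices). -/
noncomputable def hypAux : ℕ → ℕ → ℕ → ℝ
  | 0, n, k => mhn n k
  | m + 1, n, k => ∑ j ∈ Finset.Icc 1 n, hypAux m j k

/-- Generalized hyperharmonic number `h_n^{(m)}(k)`, with the convention
`h_n^{(m)}(0) = C(m+n-1, m-1)`. -/
noncomputable def gh (n m k : ℕ) : ℝ :=
  if k = 0 then (Nat.choose (m + n - 1) (m - 1) : ℝ) else hypAux (m - 1) n k

/-- Unsigned Stirling number of the first kind, defined by the standard recurrence,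
equivalently by `x(x+1)⋯(x+n-1) = ∑_{k=0}^n [n; k] xᵏ`. -/
def stir1 : ℕ → ℕ → ℕ
  | 0, 0 => 1
  | 0, _ + 1 => 0
  | _ + 1, 0 => 0
  | n + 1, k + 1 => stir1 n k + n * stir1 n (k + 1)

/-- Multiple zeta value `ζ(p, {1}_m)`. -/
noncomputable def mzv (p m : ℕ) : ℝ := ∑' n : ℕ, mhn n m / (n + 1 : ℝ) ^ p

/-- Multiple zeta star value `ζ^⋆(p, {1}_m)`. -/
noncomputable def mzvStar (p m : ℕ) : ℝ := ∑' n : ℕ, mhsn (n + 1) m / (n + 1 : ℝ) ^ p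

/-- Riemann zeta value `ζ(p) = ∑_{n=1}^∞ 1/n^p`. -/
noncomputable def rz (p : ℕ) : ℝ := ∑' n : ℕ, 1 / (n + 1 : ℝ) ^ p

/-- `U_{m,r}(p) = ∑_{n=1}^∞ ζ_{n+r}({1}_m)/n^p`. -/
noncomputable def Usum (m r p : ℕ) : ℝ := ∑' n : ℕ, mhn (n + 1 + r) m / (n + 1 : ℝ) ^ p

/-- Strictly decreasing `q`-fold sum `Ā_q(n) = ∑_{1 ≤ k_q < ⋯ < k₁ ≤ n} a_{k₁}⋯a_{k_q}`,
with `Ā_0(n) = 1` (so `Ā_q(n) = 0` when `n < q`). -/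
def sdSum {R : Type*} [Semiring R] (a : ℕ → R) : ℕ → ℕ → R
  | _, 0 => 1
  | n, q + 1 => ∑ k ∈ Finset.Icc 1 n, a k * sdSum a (k - 1) q

/-- Weakly decreasing `q`-fold sum `A_q(n) = ∑_{1 ≤ k_q ≤ ⋯ ≤ k₁ ≤ n} a_{k₁}⋯a_{k_q}`,
with `A_0(n) = 1`. -/
def wdSum {R : Type*} [Semiring R] (a : ℕ → R) : ℕ → ℕ → R
  | _, 0 => 1
  | n, q + 1 => ∑ k ∈ Finset.Icc 1 n, a k * wdSum a k q

/-!
Both sides obey the same recurrences. On the left,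
`h_{n+1}^{(r+2)}(m) = h_n^{(r+2)}(m) + h_{n+1}^{(r+1)}(m)`. On the right, splitting off the terms
with smallest index `1` rewrites the strict sum of `1/(k+r)` up to `n+1` through strict sums of
`1/(k+r+1)` up to `n`. A double induction on `r` and `n` then reduces the claim to Pascal's rule
and the absorption identity `C(N+1, r+1) / (N+1) = C(N, r) / (r+1)`.
-/

section StrictSums

variable {R : Type*} [Semiring R] (a : ℕ → R)

lemma sdSum_zero_succ (q : ℕ) : sdSum a 0 (q + 1) = 0 := by
  simp [sdSum]

lemma sdSum_succ_succ (n q : ℕ) :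
    sdSum a (n + 1) (q + 1) = sdSum a n (q + 1) + a (n + 1) * sdSum a n q := by
  rw [sdSum, sum_Icc_succ_top (by omega)]
  rfl

lemma sdSum_succ_succ_eq_shift (n q : ℕ) :
    sdSum a (n + 1) (q + 1) =
      sdSum (fun k => a (k + 1)) n (q + 1) + sdSum (fun k => a (k + 1)) n q * a 1 := by
  induction n generalizing q with
  | zero => cases q <;> simp [sdSum]
  | succ n ih =>
    rw [sdSum_succ_succ, ih, sdSum_succ_succ _ n]
    cases q with
    | zero => simp only [sdSum, mul_one, one_mul]; abel
    | succ q =>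
      rw [ih, sdSum_succ_succ _ n]
      simp only [mul_add, add_mul, mul_assoc]
      abel

end StrictSums

lemma mhn_eq_sdSum (n m : ℕ) : mhn n m = sdSum (fun k => 1 / (k : ℝ)) n m := by
  induction m generalizing n with
  | zero => rfl
  | succ m ih =>
    refine sum_congr rfl fun k _ => ?_
    rw [ih, one_div_mul_eq_div]

lemma hypAux_succ_succ (r n k : ℕ) :
    hypAux (r + 1) (n + 1) k = hypAux (r + 1) n k + hypAux r (n + 1) k := by
  rw [hypAux, sum_Icc_succ_top (by omega)]
  rfl

lemma hypAux_eq_choose_mul_sdSum (r n m : ℕ) :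
    hypAux r n (m + 1) =
      ((n + r).choose r : ℝ) * sdSum (fun k => 1 / ((k : ℝ) + r)) n (m + 1) := by
  induction r generalizing n with
  | zero => simp [hypAux, mhn_eq_sdSum]
  | succ r ih =>
    induction n with
    | zero => simp [hypAux, sdSum_zero_succ]
    | succ n ihn =>
      have shift : (fun k : ℕ => 1 / (((k + 1 : ℕ) : ℝ) + r)) =
          fun k : ℕ => 1 / ((k : ℝ) + (r + 1 : ℕ)) := by
        funext k; push_cast; ring_nf
      rw [hypAux_succ_succ, ihn, ih, sdSum_succ_succ_eq_shift, shift, sdSum_succ_succ]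
      set S := sdSum (fun k : ℕ => 1 / ((k : ℝ) + (r + 1 : ℕ))) n (m + 1)
      set T := sdSum (fun k : ℕ => 1 / ((k : ℝ) + (r + 1 : ℕ))) n m
      have pascal : ((n + 1 + (r + 1)).choose (r + 1) : ℝ) =
          (n + (r + 1)).choose (r + 1) + (n + 1 + r).choose r := by
        rw [show n + 1 + (r + 1) = n + 1 + r + 1 by ring, Nat.choose_succ_succ',
          show n + (r + 1) = n + 1 + r by ring]
        push_cast; ring
      have absorb : ((n + 1 + r + 1 : ℕ) : ℝ) * (n + 1 + r).choose r =
          (n + 1 + (r + 1)).choose (r + 1) * (r + 1 : ℕ) := by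
        rw [show n + 1 + (r + 1) = n + 1 + r + 1 by ring]
        exact_mod_cast Nat.add_one_mul_choose_eq (n + 1 + r) r
      push_cast at pascal absorb ⊢
      field_simp
      linear_combination (-((1 + (r : ℝ)) * ((n : ℝ) + 1 + ((r : ℝ) + 1)) * S)) * pascal
        + T * absorb

theorem gh_eq_binom_mul_shifted_mhn_general (r m n : ℕ) :
    gh n (r + 1) m =
      (Nat.choose (n + r) r : ℝ) * sdSum (fun k => 1 / ((k : ℝ) + r)) n m := by
  cases m with
  | zero => simp [gh, sdSum, add_comm]
  | succ m => simpa [gh] using hypAux_eq_choose_mul_sdSum r n m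

/-- formula (2.16): for `r ≥ 0`, `m, n ≥ 1`,
`h_n^{(r+1)}(m) = C(n+r, r) ∑_{1 ≤ k_m < ⋯ < k₁ ≤ n} 1/((k₁+r)⋯(k_m+r))`. -/
theorem gh_eq_binom_mul_shifted_mhn (r m n : ℕ) (hm : 1 ≤ m) (hn : 1 ≤ n) :
    gh n (r + 1) m =
      (Nat.choose (n + r) r : ℝ) * sdSum (fun k => 1 / ((k : ℝ) + r)) n m :=
  gh_eq_binom_mul_shifted_mhn_general r m n
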